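/- arXiv:1509.00863 — 3 statements merged into one kernel-verified Lean document; each statement's English description precedes it below -/
import Mathlib

section
/- Let a be weakly degenerate at x₀ ∈ (0,1). Then for every u ∈ H²_a(0,1) with u'(0) = u'(1) = 0 and every v ∈ H¹_a(0,1), one has ∫₀¹ (a u')'(x) v(x) dx = − ∫₀¹ a(x) u'(x) v'(x) dx. -/
open MeasureTheory Set Filter

noncomputable section

/-- Absolute continuity of `u` on `[c,d]`, encoded via the fundamental theorem of calculus
with an integrable derivative. -/
def ACOn (u : ℝ → ℝ) (c d : ℝ) : Prop :=
  IntervalIntegrable (deriv u) volume c d ∧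
    ∀ x ∈ Icc c d, u x = u c + ∫ t in c..x, deriv u t

/-- Membership in `H¹(0,1)`. -/
def MemH1 (u : ℝ → ℝ) : Prop :=
  ACOn u 0 1 ∧ IntegrableOn (fun x => (u x)^2) (Ioo 0 1) ∧
    IntegrableOn (fun x => (deriv u x)^2) (Ioo 0 1)

/-- `a ∈ W^{1,1}(0,1)`. -/
def W11 (a : ℝ → ℝ) : Prop := ACOn a 0 1

/-- `a ∈ W^{1,∞}(0,1)`. -/
def W1infty (a : ℝ → ℝ) : Prop :=
  ACOn a 0 1 ∧ ∃ M : ℝ, ∀ᵐ x ∂(volume.restrict (Icc (0:ℝ) 1)), |deriv a x| ≤ M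

/-- Common part of the degeneracy conditions at `x₀` with constant `K`. -/
def DegAt (a : ℝ → ℝ) (x₀ K : ℝ) : Prop :=
  x₀ ∈ Ioo (0:ℝ) 1 ∧ a x₀ = 0 ∧ (∀ x ∈ Icc (0:ℝ) 1, x ≠ x₀ → 0 < a x) ∧
    ∀ᵐ x ∂(volume.restrict (Icc (0:ℝ) 1)), (x - x₀) * deriv a x ≤ K * a x

/-- `a` is weakly degenerate at `x₀` with constant `K`. -/
def WeaklyDeg (a : ℝ → ℝ) (x₀ K : ℝ) : Prop :=
  DegAt a x₀ K ∧ W11 a ∧ K ∈ Ioo (0:ℝ) 1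

/-- `a` is strongly degenerate at `x₀` with constant `K`. -/
def StronglyDeg (a : ℝ → ℝ) (x₀ K : ℝ) : Prop :=
  DegAt a x₀ K ∧ W1infty a ∧ K ∈ Ico (1:ℝ) 2

/-- Weakly (`wk = true`) or strongly (`wk = false`) degenerate. -/
def Deg (a : ℝ → ℝ) (x₀ K : ℝ) (wk : Bool) : Prop :=
  cond wk (WeaklyDeg a x₀ K) (StronglyDeg a x₀ K)

/-- `H¹_a(0,1)` in the weakly degenerate case: absolutely continuous on `[0,1]`
with `√a · u' ∈ L²(0,1)`. -/
def MemH1aWeak (a u : ℝ → ℝ) : Prop :=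
  ACOn u 0 1 ∧ IntegrableOn (fun x => a x * (deriv u x)^2) (Ioo 0 1)

/-- Locally absolutely continuous on `[0,x₀) ∪ (x₀,1]`. -/
def LocACAway (u : ℝ → ℝ) (x₀ : ℝ) : Prop :=
  (∀ c d : ℝ, 0 ≤ c → c ≤ d → d < x₀ → ACOn u c d) ∧
  (∀ c d : ℝ, x₀ < c → c ≤ d → d ≤ 1 → ACOn u c d)

/-- `H¹_a(0,1)` in the strongly degenerate case. -/
def MemH1aStrong (a u : ℝ → ℝ) (x₀ : ℝ) : Prop :=
  IntegrableOn (fun x => (u x)^2) (Ioo 0 1) ∧ LocACAway u x₀ ∧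
    IntegrableOn (fun x => a x * (deriv u x)^2) (Ioo 0 1)

/-- `H¹_a(0,1)`, weak (`wk = true`) or strong (`wk = false`) version. -/
def MemH1a (a u : ℝ → ℝ) (x₀ : ℝ) (wk : Bool) : Prop :=
  cond wk (MemH1aWeak a u) (MemH1aStrong a u x₀)

/-- `H²_a(0,1) = {u ∈ H¹_a(0,1) : a u' ∈ H¹(0,1)}`. -/
def MemH2a (a u : ℝ → ℝ) (x₀ : ℝ) (wk : Bool) : Prop :=
  MemH1a a u x₀ wk ∧ ACOn (fun x => a x * deriv u x) 0 1 ∧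
    IntegrableOn (fun x => (deriv (fun y => a y * deriv u y) x)^2) (Ioo 0 1)

/-- `D(A₁) = {u ∈ H²_a(0,1) : u'(0) = u'(1) = 0}`. -/
def MemDA1 (a u : ℝ → ℝ) (x₀ : ℝ) (wk : Bool) : Prop :=
  MemH2a a u x₀ wk ∧ deriv u 0 = 0 ∧ deriv u 1 = 0

/-- `L²_{1/a}(0,1)`. -/
def MemL2inva (a u : ℝ → ℝ) : Prop :=
  IntegrableOn (fun x => (u x)^2) (Ioo 0 1) ∧
    IntegrableOn (fun x => (u x)^2 / a x) (Ioo 0 1)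

/-- `H¹_{1/a}(0,1) = L²_{1/a}(0,1) ∩ H¹(0,1)`. -/
def MemH1inva (a u : ℝ → ℝ) : Prop :=
  MemL2inva a u ∧ ACOn u 0 1 ∧ IntegrableOn (fun x => (deriv u x)^2) (Ioo 0 1)

/-- `H²_{1/a}(0,1) = {u ∈ H¹_{1/a}(0,1) : u' ∈ H¹(0,1)}` (then `a u'' ∈ L²_{1/a}`). -/
def MemH2inva (a u : ℝ → ℝ) : Prop :=
  MemH1inva a u ∧ ACOn (deriv u) 0 1 ∧
    IntegrableOn (fun x => a x * (deriv (deriv u) x)^2) (Ioo 0 1)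

/-- `D(A₂) = {u ∈ H²_{1/a}(0,1) : u'(0) = u'(1) = 0}`. -/
def MemDA2 (a u : ℝ → ℝ) : Prop :=
  MemH2inva a u ∧ deriv u 0 = 0 ∧ deriv u 1 = 0

/-- The time weight `Θ(t) = 1/(t(T-t))⁴`. -/
def Theta (T t : ℝ) : ℝ := 1 / (t * (T - t))^4

/-- The space weight `ψ(x) = c₁ (∫_{x₀}^x (y-x₀)/a(y) dy − c₂)`. -/
def psiW (a : ℝ → ℝ) (x₀ c₁ c₂ x : ℝ) : ℝ :=
  c₁ * ((∫ y in x₀..x, (y - x₀) / a y) - c₂)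

/-- The weight `φ(t,x) = Θ(t) ψ(x)`. -/
def phiW (a : ℝ → ℝ) (x₀ c₁ c₂ T t x : ℝ) : ℝ := Theta T t * psiW a x₀ c₁ c₂ x

/-- The space weight `μ(x) = d₁ (∫_{x₀}^x (y-x₀)e^{R(y-x₀)²}/a(y) dy − d₂)`. -/
def muW (a : ℝ → ℝ) (x₀ d₁ d₂ R x : ℝ) : ℝ :=
  d₁ * ((∫ y in x₀..x, (y - x₀) * Real.exp (R * (y - x₀)^2) / a y) - d₂)

/-- The weight `γ(t,x) = Θ(t) μ(x)`. -/
def gammaW (a : ℝ → ℝ) (x₀ d₁ d₂ R T t x : ℝ) : ℝ := Theta T t * muW a x₀ d₁ d₂ R x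

/-- Hypotheses (A) of the divergence-form Carleman estimate. -/
def HypA (a : ℝ → ℝ) (x₀ K : ℝ) (wk : Bool) : Prop :=
  cond wk
    (WeaklyDeg a x₀ K ∧ ContDiffOn ℝ 1 a (Icc 0 1 \ {x₀}))
    (StronglyDeg a x₀ K ∧
      (4/3 < K → ∃ ϑ, ϑ ∈ Ioc (0:ℝ) K ∧
        AntitoneOn (fun x => a x / |x - x₀| ^ ϑ) (Ico 0 x₀) ∧
        MonotoneOn (fun x => a x / |x - x₀| ^ ϑ) (Ioc x₀ 1) ∧
        (3/2 < K →
          (∃ ε > 0, ∀ x ∈ Icc (0:ℝ) 1, x ≠ x₀ → ε ≤ a x / |x - x₀| ^ ϑ) ∧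
          ∃ S > 0, ∀ᵐ x ∂(volume.restrict (Icc (0:ℝ) 1)),
            |deriv a x| ≤ S * |x - x₀| ^ (2*ϑ - 3))))

/-- Hypotheses (B) of the non-divergence-form Carleman estimate. -/
def HypB (a : ℝ → ℝ) (x₀ K : ℝ) (wk : Bool) : Prop :=
  Deg a x₀ K wk ∧
  (∃ L : NNReal, LipschitzOnWith L (fun x => (x - x₀) * deriv a x / a x) (Icc 0 1)) ∧
  (1/2 ≤ K → ∃ ϑ, ϑ ∈ Ioc (0:ℝ) K ∧
      AntitoneOn (fun x => a x / |x - x₀| ^ ϑ) (Ico 0 x₀) ∧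
      MonotoneOn (fun x => a x / |x - x₀| ^ ϑ) (Ioc x₀ 1))

/-- `g ∈ L^∞_loc([0,1] ∖ {x₀})`. -/
def LocBddAway (g : ℝ → ℝ) (x₀ : ℝ) : Prop :=
  ∀ c d : ℝ, Icc c d ⊆ Icc (0:ℝ) 1 \ {x₀} →
    ∃ M : ℝ, ∀ x ∈ Icc c d, |g x| ≤ M

/-- `h ∈ W^{1,∞}_loc([0,1] ∖ {x₀}; L^∞(0,1))`. -/
def LocW1inftyAway (h : ℝ → ℝ → ℝ) (x₀ : ℝ) : Prop :=
  ∀ c d : ℝ, Icc c d ⊆ Icc (0:ℝ) 1 \ {x₀} →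
    (∃ M : ℝ, ∀ x ∈ Icc c d, ∀ B ∈ Icc (0:ℝ) 1, |h x B| ≤ M) ∧
    ∃ L : NNReal, ∀ B ∈ Icc (0:ℝ) 1, LipschitzOnWith L (fun x => h x B) (Icc c d)

/-- Hypothesis (O) (with `σ = -1`) resp. (O') (with `σ = 1`):
`σ (a'/(2√a))(∫ₓᴮ g + h₀) + √a g = h(x,B)` for a.e. `x` and all admissible `B`. -/
def HypOgen (σ : ℝ) (a g : ℝ → ℝ) (h : ℝ → ℝ → ℝ) (g₀ h₀ x₀ : ℝ) : Prop :=
  0 < g₀ ∧ 0 < h₀ ∧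
  (∀ᵐ x ∂(volume.restrict (Icc (0:ℝ) 1)), g₀ ≤ g x) ∧
  LocBddAway g x₀ ∧ LocW1inftyAway h x₀ ∧
  ∀ᵐ x ∂(volume.restrict (Icc (0:ℝ) 1)), ∀ B ∈ Icc (0:ℝ) 1,
    ((x < B ∧ B < x₀) ∨ (x₀ < x ∧ x < B)) →
      σ * (deriv a x / (2 * Real.sqrt (a x))) * ((∫ t in x..B, g t) + h₀)
        + Real.sqrt (a x) * g x = h x B

/-- The space-time cylinder `Q_T = (0,T) × (0,1)`. -/
def QT (T : ℝ) : Set (ℝ × ℝ) := Ioo 0 T ×ˢ Ioo (0:ℝ) 1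

/-- The class `𝒱 = L²(0,T; D(A₁)) ∩ H¹(0,T; H¹_a(0,1))`. -/
def InClassV (a : ℝ → ℝ) (x₀ T : ℝ) (wk : Bool) (v : ℝ → ℝ → ℝ) : Prop :=
  (∀ t ∈ Ioo (0:ℝ) T, MemDA1 a (v t) x₀ wk) ∧
  IntegrableOn (fun p : ℝ × ℝ =>
    (v p.1 p.2)^2 + a p.2 * (deriv (v p.1) p.2)^2
      + (deriv (fun y => a y * deriv (v p.1) y) p.2)^2) (QT T) ∧
  IntegrableOn (fun p : ℝ × ℝ =>
    (deriv (fun τ => v τ p.2) p.1)^2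
      + a p.2 * (deriv (fun y => deriv (fun τ => v τ y) p.1) p.2)^2) (QT T)

/-- The class `𝒮 = H¹(0,T; H¹_{1/a}(0,1)) ∩ L²(0,T; H²_{1/a}(0,1))`. -/
def InClassS (a : ℝ → ℝ) (T : ℝ) (v : ℝ → ℝ → ℝ) : Prop :=
  (∀ t ∈ Ioo (0:ℝ) T, MemH2inva a (v t)) ∧
  IntegrableOn (fun p : ℝ × ℝ =>
    (v p.1 p.2)^2 / a p.2 + (deriv (v p.1) p.2)^2
      + a p.2 * (deriv (deriv (v p.1)) p.2)^2) (QT T) ∧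
  IntegrableOn (fun p : ℝ × ℝ =>
    (deriv (fun τ => v τ p.2) p.1)^2 / a p.2
      + (deriv (fun y => deriv (fun τ => v τ y) p.1) p.2)^2) (QT T)

/-- Neumann boundary conditions `v_x(t,0) = v_x(t,1) = 0` for `t ∈ (0,T)`. -/
def NeumannBC (T : ℝ) (v : ℝ → ℝ → ℝ) : Prop :=
  ∀ t ∈ Ioo (0:ℝ) T, deriv (v t) 0 = 0 ∧ deriv (v t) 1 = 0

/-- The equation `v_t + (a v_x)_x = h` in `Q_T`. -/
def SolDiv (a : ℝ → ℝ) (T : ℝ) (v h : ℝ → ℝ → ℝ) : Prop :=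
  ∀ t ∈ Ioo (0:ℝ) T, ∀ x ∈ Ioo (0:ℝ) 1,
    deriv (fun τ => v τ x) t + deriv (fun y => a y * deriv (v t) y) x = h t x

/-- The equation `v_t + a v_xx = h` in `Q_T`. -/
def SolNonDiv (a : ℝ → ℝ) (T : ℝ) (v h : ℝ → ℝ → ℝ) : Prop :=
  ∀ t ∈ Ioo (0:ℝ) T, ∀ x ∈ Ioo (0:ℝ) 1,
    deriv (fun τ => v τ x) t + a x * deriv (deriv (v t)) x = h t x

/-- Test function class `H¹(0,T; L²(0,1)) ∩ L²(0,T; H¹_a(0,1))` for the weak formulation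
in divergence form. -/
def TestClassDiv (a : ℝ → ℝ) (x₀ T : ℝ) (wk : Bool) (φ : ℝ → ℝ → ℝ) : Prop :=
  (∀ t ∈ Icc (0:ℝ) T, MemH1a a (φ t) x₀ wk) ∧
  IntegrableOn (fun p : ℝ × ℝ =>
    (φ p.1 p.2)^2 + a p.2 * (deriv (φ p.1) p.2)^2
      + (deriv (fun τ => φ τ p.2) p.1)^2) (QT T)

/-- Weak solution of `v_t + (a v_x)_x = 0` with Neumann boundary conditions. -/
def WeakSolDiv (a : ℝ → ℝ) (x₀ T : ℝ) (wk : Bool) (v : ℝ → ℝ → ℝ) : Prop :=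
  (∀ t ∈ Icc (0:ℝ) T, MemH1a a (v t) x₀ wk) ∧
  IntegrableOn (fun p : ℝ × ℝ =>
    (v p.1 p.2)^2 + a p.2 * (deriv (v p.1) p.2)^2) (QT T) ∧
  ∀ φ : ℝ → ℝ → ℝ, TestClassDiv a x₀ T wk φ →
    (∫ x in Ioo (0:ℝ) 1, v T x * φ T x) - (∫ x in Ioo (0:ℝ) 1, v 0 x * φ 0 x)
      - (∫ t in Ioo (0:ℝ) T, ∫ x in Ioo (0:ℝ) 1, v t x * deriv (fun τ => φ τ x) t)
      = ∫ t in Ioo (0:ℝ) T, ∫ x in Ioo (0:ℝ) 1, a x * deriv (v t) x * deriv (φ t) x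

/-- Test function class `H¹(0,T; L²_{1/a}(0,1)) ∩ L²(0,T; H¹_{1/a}(0,1))` for the weak
formulation in non-divergence form. -/
def TestClassNonDiv (a : ℝ → ℝ) (T : ℝ) (φ : ℝ → ℝ → ℝ) : Prop :=
  (∀ t ∈ Icc (0:ℝ) T, MemH1inva a (φ t)) ∧
  IntegrableOn (fun p : ℝ × ℝ =>
    (φ p.1 p.2)^2 / a p.2 + (deriv (φ p.1) p.2)^2
      + (deriv (fun τ => φ τ p.2) p.1)^2 / a p.2) (QT T)

/-- Weak solution of `v_t + a v_xx = 0` with Neumann boundary conditions. -/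
def WeakSolNonDiv (a : ℝ → ℝ) (T : ℝ) (v : ℝ → ℝ → ℝ) : Prop :=
  (∀ t ∈ Icc (0:ℝ) T, MemH1inva a (v t)) ∧
  IntegrableOn (fun p : ℝ × ℝ =>
    (v p.1 p.2)^2 / a p.2 + (deriv (v p.1) p.2)^2) (QT T) ∧
  ∀ φ : ℝ → ℝ → ℝ, TestClassNonDiv a T φ →
    (∫ x in Ioo (0:ℝ) 1, v T x * φ T x / a x) - (∫ x in Ioo (0:ℝ) 1, v 0 x * φ 0 x / a x)
      - (∫ t in Ioo (0:ℝ) T, ∫ x in Ioo (0:ℝ) 1, v t x * deriv (fun τ => φ τ x) t / a x)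
      = ∫ t in Ioo (0:ℝ) T, ∫ x in Ioo (0:ℝ) 1, deriv (v t) x * deriv (φ t) x

end

/-! In `H²_a` both `v` and the flux `a u'` are absolutely continuous on `[0,1]`, so the formula is
ordinary integration by parts for absolutely continuous functions; the boundary term `a u' v`
vanishes at `0` and `1` because `u'(0) = u'(1) = 0`. -/

theorem AbsolutelyContinuousOnInterval.congr {X : Type*} [PseudoMetricSpace X] {f g : ℝ → X}
    {a b : ℝ} (hf : AbsolutelyContinuousOnInterval f a b) (hfg : EqOn f g (uIcc a b)) :
    AbsolutelyContinuousOnInterval g a b := by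
  refine Tendsto.congr' (eventually_inf_principal.2 (Eventually.of_forall fun E hE => ?_)) hf
  refine Finset.sum_congr rfl fun i hi => ?_
  rw [hfg (hE.1 i hi).1, hfg (hE.1 i hi).2]

theorem ACOn.absolutelyContinuousOnInterval {u : ℝ → ℝ} {c d : ℝ} (hu : ACOn u c d)
    (hcd : c ≤ d) : AbsolutelyContinuousOnInterval u c d := by
  have hprimitive : AbsolutelyContinuousOnInterval (fun x => u c + ∫ t in c..x, deriv u t) c d :=
    (LipschitzWith.const (u c)).lipschitzOnWith.absolutelyContinuousOnInterval.fun_add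
      (hu.1.absolutelyContinuousOnInterval_intervalIntegral left_mem_uIcc)
  refine hprimitive.congr fun x hx => (hu.2 x ?_).symm
  rwa [uIcc_of_le hcd] at hx

theorem ACOn.setIntegral_deriv_mul_eq_sub {f g : ℝ → ℝ} {c d : ℝ} (hcd : c ≤ d)
    (hf : ACOn f c d) (hg : ACOn g c d) :
    ∫ x in Ioo c d, deriv f x * g x = f d * g d - f c * g c - ∫ x in Ioo c d, f x * deriv g x := by
  have hparts := (hg.absolutelyContinuousOnInterval hcd).integral_mul_deriv_eq_deriv_mul
    (hf.absolutelyContinuousOnInterval hcd)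
  simpa only [intervalIntegral.integral_of_le hcd, integral_Ioc_eq_integral_Ioo,
    mul_comm (g _), mul_comm (deriv g _)] using hparts

theorem statement0_general (a : ℝ → ℝ) (x₀ : ℝ)
    (u v : ℝ → ℝ) (hu : MemDA1 a u x₀ true) (hv : MemH1aWeak a v) :
    (∫ x in Ioo (0:ℝ) 1, deriv (fun y => a y * deriv u y) x * v x)
      = - ∫ x in Ioo (0:ℝ) 1, a x * deriv u x * deriv v x := by
  obtain ⟨⟨-, hflux, -⟩, hu0, hu1⟩ := hu
  rw [hflux.setIntegral_deriv_mul_eq_sub zero_le_one hv.1]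
  simp [hu0, hu1]

/-- Integration by parts formula, weakly degenerate case. -/
theorem statement0 (a : ℝ → ℝ) (x₀ : ℝ) (ha : ∃ K, WeaklyDeg a x₀ K)
    (u v : ℝ → ℝ) (hu : MemDA1 a u x₀ true) (hv : MemH1aWeak a v) :
    (∫ x in Ioo (0:ℝ) 1, deriv (fun y => a y * deriv u y) x * v x)
      = - ∫ x in Ioo (0:ℝ) 1, a x * deriv u x * deriv v x :=
  statement0_general a x₀ u v hu hv
end

section
/- Let a be strongly degenerate at x₀ ∈ (0,1). Then for all x ∈ [0,1] ∖ {x₀}, (x − x₀)²/a(x) ≤ C, where C := max{ x₀²/a(0), (1 − x₀)²/a(1) }. -/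
open MeasureTheory Set Filter

/-! Away from `x₀` the condition `(x - x₀) a' ≤ K a` says that `a / |x - x₀| ^ K` decreases
as `x` moves away from `x₀`. As `a` is only absolutely continuous, this is proved by a Grönwall
argument: on `[p, q]` with `x₀ < p`, `a` lies below `J y = a p + ∫ₚʸ K a / (t - x₀)`, and
`J / (y - x₀) ^ K` has nonpositive derivative; the side `x < x₀` follows by reflection.
Comparing `x` with the endpoint `e` of `[0, 1]` on the same side of `x₀` gives
`|x - x₀| ^ K / a x ≤ |e - x₀| ^ K / a e`, and since `K ≤ 2`, multiplying by
`|x - x₀| ^ (2 - K) ≤ |e - x₀| ^ (2 - K)` yields the bound with exponent `2`. -/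

theorem sq_div_le_sq_div_of_div_rpow_le {A B r s K : ℝ} (hA : 0 < A) (hB : 0 < B) (hr : 0 < r)
    (hrs : r ≤ s) (hK : K ≤ 2) (h : A / s ^ K ≤ B / r ^ K) : r ^ 2 / B ≤ s ^ 2 / A := by
  have hs : 0 < s := hr.trans_le hrs
  rw [div_le_div_iff₀ (Real.rpow_pos_of_pos hs K) (Real.rpow_pos_of_pos hr K)] at h
  have hsplit : ∀ {z : ℝ}, 0 < z → z ^ 2 = z ^ K * z ^ (2 - K) := fun hz => by
    rw [← Real.rpow_add hz, add_sub_cancel, Real.rpow_two]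
  rw [div_le_div_iff₀ hB hA, hsplit hr, hsplit hs]
  calc r ^ K * r ^ (2 - K) * A = A * r ^ K * r ^ (2 - K) := by ring
    _ ≤ B * s ^ K * r ^ (2 - K) := by gcongr
    _ ≤ B * s ^ K * s ^ (2 - K) := by gcongr
    _ = s ^ K * s ^ (2 - K) * B := by ring

theorem div_rpow_le_of_le_add_integral {f : ℝ → ℝ} {x₀ K p q : ℝ} (hK : 0 ≤ K)
    (hp : x₀ < p) (hpq : p ≤ q) (hf : ContinuousOn f (Icc p q))
    (hle : ∀ y ∈ Icc p q, f y ≤ f p + ∫ t in p..y, K * f t / (t - x₀)) :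
    f q / (q - x₀) ^ K ≤ f p / (p - x₀) ^ K := by
  set g : ℝ → ℝ := fun t => K * f t / (t - x₀)
  set J : ℝ → ℝ := fun y => f p + ∫ t in p..y, g t
  have hgap : ∀ y ∈ Icc p q, 0 < y - x₀ := fun y hy => by linarith [hy.1]
  have hg : ContinuousOn g (Icc p q) :=
    (continuousOn_const.mul hf).div (continuousOn_id.sub continuousOn_const)
      fun y hy => (hgap y hy).ne'
  have hJ : ContinuousOn J (Icc p q) :=
    continuousOn_const.add <| (intervalIntegral.continuousOn_primitive_interval'
      (hg.intervalIntegrable_of_Icc hpq) left_mem_uIcc).mono Icc_subset_uIcc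
  have hJ' : ∀ y ∈ Ioo p q, HasDerivAt J (g y) y := fun y hy =>
    (intervalIntegral.integral_hasDerivAt_right
      ((hg.mono (Icc_subset_Icc le_rfl hy.2.le)).intervalIntegrable_of_Icc hy.1.le)
      ((hg.mono Ioo_subset_Icc_self).stronglyMeasurableAtFilter isOpen_Ioo y hy)
      (hg.continuousAt (Icc_mem_nhds hy.1 hy.2))).const_add (f p)
  have hquot' : ∀ y ∈ Ioo p q, HasDerivAt (fun y => J y / (y - x₀) ^ K)
      (K * (y - x₀) ^ (K - 1) * (f y - J y) / ((y - x₀) ^ K) ^ 2) y := by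
    intro y hy
    have hy₀ := hgap y (Ioo_subset_Icc_self hy)
    refine ((hJ' y hy).div (((hasDerivAt_id y).sub_const x₀).rpow_const (Or.inl hy₀.ne'))
      (Real.rpow_pos_of_pos hy₀ K).ne').congr_deriv ?_
    simp only [g, id]
    rw [Real.rpow_sub_one hy₀.ne']
    ring
  have hanti : AntitoneOn (fun y => J y / (y - x₀) ^ K) (Icc p q) := by
    refine antitoneOn_of_hasDerivWithinAt_nonpos (convex_Icc p q)
      (hJ.div ((continuousOn_id.sub continuousOn_const).rpow_const
        fun y hy => Or.inl (hgap y hy).ne') fun y hy => (Real.rpow_pos_of_pos (hgap y hy) K).ne')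
      (fun y hy => (hquot' y (by rwa [interior_Icc] at hy)).hasDerivWithinAt) fun y hy => ?_
    rw [interior_Icc] at hy
    have hy₀ := hgap y (Ioo_subset_Icc_self hy)
    have hfJ := hle y (Ioo_subset_Icc_self hy)
    exact div_nonpos_of_nonpos_of_nonneg
      (mul_nonpos_of_nonneg_of_nonpos (by positivity) (by linarith)) (sq_nonneg _)
  have hq : q ∈ Icc p q := ⟨hpq, le_rfl⟩
  calc f q / (q - x₀) ^ K ≤ J q / (q - x₀) ^ K :=
        div_le_div_of_nonneg_right (hle q hq) (Real.rpow_nonneg (hgap q hq).le K)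
    _ ≤ J p / (p - x₀) ^ K := hanti ⟨le_rfl, hpq⟩ hq hpq
    _ = f p / (p - x₀) ^ K := by simp [J]

theorem div_rpow_le_of_le_add_integral_of_lt {f : ℝ → ℝ} {x₀ K p q : ℝ} (hK : 0 ≤ K)
    (hq : q < x₀) (hpq : p ≤ q) (hf : ContinuousOn f (Icc p q))
    (hle : ∀ y ∈ Icc p q, f y ≤ f q + ∫ t in y..q, K * f t / (x₀ - t)) :
    f p / (x₀ - p) ^ K ≤ f q / (x₀ - q) ^ K := by
  have hneg : ∀ y ∈ Icc (-q) (-p), -y ∈ Icc p q := fun y hy =>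
    ⟨by linarith [hy.2], by linarith [hy.1]⟩
  have h := div_rpow_le_of_le_add_integral (f := fun t => f (-t)) (x₀ := -x₀) (p := -q)
    (q := -p) hK (neg_lt_neg hq) (neg_le_neg hpq) (hf.comp continuousOn_neg hneg) fun y hy => by
      have hsub : ∀ t, t - -x₀ = x₀ - -t := fun t => by ring
      simp only [neg_neg, hsub]
      rw [intervalIntegral.integral_comp_neg (fun t => K * f t / (x₀ - t)), neg_neg]
      exact hle (-y) (hneg y hy)
  simpa only [neg_neg, sub_neg_eq_add, neg_add_eq_sub] using h

section ACOn

variable {u g : ℝ → ℝ} {c d x y : ℝ}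

theorem ACOn.continuousOn (hu : ACOn u c d) : ContinuousOn u (Icc c d) :=
  ((continuousOn_const.add (intervalIntegral.continuousOn_primitive_interval' hu.1
    left_mem_uIcc)).mono Icc_subset_uIcc).congr hu.2

theorem ACOn.intervalIntegrable_deriv (hu : ACOn u c d) (hx : x ∈ Icc c d) (hy : y ∈ Icc c d) :
    IntervalIntegrable (deriv u) volume x y :=
  hu.1.mono_set (uIcc_subset_uIcc (Icc_subset_uIcc hx) (Icc_subset_uIcc hy))

theorem ACOn.sub_eq_integral (hu : ACOn u c d) (hx : x ∈ Icc c d) (hy : y ∈ Icc c d) :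
    u y - u x = ∫ t in x..y, deriv u t := by
  have hc : c ∈ Icc c d := ⟨le_rfl, hx.1.trans hx.2⟩
  rw [hu.2 y hy, hu.2 x hx, ← intervalIntegral.integral_interval_sub_left
    (hu.intervalIntegrable_deriv hc hy) (hu.intervalIntegrable_deriv hc hx)]
  ring

theorem ACOn.le_add_integral_of_deriv_le (hu : ACOn u c d) (hx : c ≤ x) (hxy : x ≤ y)
    (hy : y ≤ d) (hg : IntervalIntegrable g volume x y)
    (hle : ∀ᵐ t ∂volume.restrict (Icc x y), deriv u t ≤ g t) :
    u y ≤ u x + ∫ t in x..y, g t := by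
  have hx' : x ∈ Icc c d := ⟨hx, hxy.trans hy⟩
  have hy' : y ∈ Icc c d := ⟨hx.trans hxy, hy⟩
  have := intervalIntegral.integral_mono_ae_restrict hxy
    (hu.intervalIntegrable_deriv hx' hy') hg hle
  linarith [hu.sub_eq_integral hx' hy']

theorem ACOn.add_integral_le_of_le_deriv (hu : ACOn u c d) (hx : c ≤ x) (hxy : x ≤ y)
    (hy : y ≤ d) (hg : IntervalIntegrable g volume x y)
    (hle : ∀ᵐ t ∂volume.restrict (Icc x y), g t ≤ deriv u t) :
    u x + ∫ t in x..y, g t ≤ u y := by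
  have hx' : x ∈ Icc c d := ⟨hx, hxy.trans hy⟩
  have hy' : y ∈ Icc c d := ⟨hx.trans hxy, hy⟩
  have := intervalIntegral.integral_mono_ae_restrict hxy hg
    (hu.intervalIntegrable_deriv hx' hy') hle
  linarith [hu.sub_eq_integral hx' hy']

end ACOn

section Degenerate

variable {a : ℝ → ℝ} {x₀ K x : ℝ}

theorem div_rpow_le_of_deriv_le_of_lt (hK : 0 ≤ K) (ha : ACOn a 0 1)
    (hdeg : ∀ᵐ t ∂volume.restrict (Icc (0:ℝ) 1), (t - x₀) * deriv a t ≤ K * a t)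
    (hx : 0 ≤ x) (hxx₀ : x < x₀) (hx₀ : x₀ ≤ 1) :
    a 0 / x₀ ^ K ≤ a x / (x₀ - x) ^ K := by
  have hgap : ∀ t ∈ Icc 0 x, 0 < x₀ - t := fun t ht => by linarith [ht.2]
  have hcont : ContinuousOn a (Icc 0 x) :=
    ha.continuousOn.mono (Icc_subset_Icc le_rfl (by linarith))
  have hg : ContinuousOn (fun t => K * a t / (x₀ - t)) (Icc 0 x) :=
    (continuousOn_const.mul hcont).div (continuousOn_const.sub continuousOn_id)
      fun t ht => (hgap t ht).ne'
  conv_lhs => rw [← sub_zero x₀]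
  refine div_rpow_le_of_le_add_integral_of_lt hK hxx₀ hx hcont fun y hy => ?_
  have hlow := ha.add_integral_le_of_le_deriv (g := fun t => -(K * a t / (x₀ - t))) hy.1 hy.2
    (by linarith) ((hg.mono (Icc_subset_Icc hy.1 le_rfl)).intervalIntegrable_of_Icc hy.2).neg ?_
  · rw [intervalIntegral.integral_neg] at hlow
    linarith
  filter_upwards [ae_restrict_of_ae_restrict_of_subset (Icc_subset_Icc hy.1 (by linarith)) hdeg,
    ae_restrict_mem measurableSet_Icc] with t ht hty
  rw [neg_le, le_div_iff₀ (hgap t ⟨hy.1.trans hty.1, hty.2⟩)]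
  linarith

theorem div_rpow_le_of_deriv_le_of_gt (hK : 0 ≤ K) (ha : ACOn a 0 1)
    (hdeg : ∀ᵐ t ∂volume.restrict (Icc (0:ℝ) 1), (t - x₀) * deriv a t ≤ K * a t)
    (hx₀ : 0 ≤ x₀) (hxx₀ : x₀ < x) (hx : x ≤ 1) :
    a 1 / (1 - x₀) ^ K ≤ a x / (x - x₀) ^ K := by
  have hgap : ∀ t ∈ Icc x 1, 0 < t - x₀ := fun t ht => by linarith [ht.1]
  have hcont : ContinuousOn a (Icc x 1) :=
    ha.continuousOn.mono (Icc_subset_Icc (by linarith) le_rfl)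
  have hg : ContinuousOn (fun t => K * a t / (t - x₀)) (Icc x 1) :=
    (continuousOn_const.mul hcont).div (continuousOn_id.sub continuousOn_const)
      fun t ht => (hgap t ht).ne'
  refine div_rpow_le_of_le_add_integral hK hxx₀ hx hcont fun y hy =>
    ha.le_add_integral_of_deriv_le (by linarith) hy.1 hy.2
      ((hg.mono (Icc_subset_Icc le_rfl hy.2)).intervalIntegrable_of_Icc hy.1) ?_
  filter_upwards [ae_restrict_of_ae_restrict_of_subset (Icc_subset_Icc (by linarith) hy.2) hdeg,
    ae_restrict_mem measurableSet_Icc] with t ht hty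
  rw [le_div_iff₀ (hgap t ⟨hty.1, hty.2.trans hy.2⟩)]
  linarith

end Degenerate

/-- Pointwise bound `(x-x₀)²/a(x) ≤ max{x₀²/a(0), (1-x₀)²/a(1)}`. -/
theorem statement9 (a : ℝ → ℝ) (x₀ : ℝ) (ha : ∃ K, StronglyDeg a x₀ K) :
    ∀ x ∈ Icc (0:ℝ) 1, x ≠ x₀ →
      (x - x₀)^2 / a x ≤ max (x₀^2 / a 0) ((1 - x₀)^2 / a 1) := by
  obtain ⟨K, ⟨⟨hx₀0, hx₀1⟩, -, hpos, hdeg⟩, ⟨hAC, -⟩, hK1, hK2⟩ := ha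
  intro x hx hne
  have hax := hpos x hx hne
  rcases hne.lt_or_gt with hlt | hgt
  · refine le_max_of_le_left ?_
    rw [← neg_sub, neg_sq]
    exact sq_div_le_sq_div_of_div_rpow_le (hpos 0 ⟨le_rfl, zero_le_one⟩ hx₀0.ne) hax
      (by linarith) (by linarith [hx.1]) hK2.le
      (div_rpow_le_of_deriv_le_of_lt (by linarith) hAC hdeg hx.1 hlt hx₀1.le)
  · refine le_max_of_le_right ?_
    exact sq_div_le_sq_div_of_div_rpow_le (hpos 1 ⟨zero_le_one, le_rfl⟩ hx₀1.ne') hax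
      (by linarith) (by linarith [hx.2]) hK2.le
      (div_rpow_le_of_deriv_le_of_gt (by linarith) hAC hdeg hx₀0.le hgt hx.2)
end

section
/- Let a be weakly or strongly degenerate at x₀ ∈ (0,1) with constant K < 2, let c₁ > 0 and c₂ > max{ (1 − x₀)²/(a(1)(2 − K)), x₀²/(a(0)(2 − K)) }, and define ψ(x) = c₁(∫_{x₀}^x (y − x₀)/a(y) dy − c₂). Then ψ is well defined (the integral converges for every x ∈ [0,1]) and −c₁c₂ ≤ ψ(x) < 0 for every x ∈ [0,1]. -/
open MeasureTheory Set Filter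

open intervalIntegral in
lemma gronwall_aux (u k : ℝ → ℝ) (s b : ℝ) (hsb : s ≤ b)
    (hu : ContinuousOn u (Icc s b)) (hk : ContinuousOn k (Icc s b))
    (hk0 : ∀ y ∈ Icc s b, 0 ≤ k y)
    (hineq : ∀ τ ∈ Icc s b, u τ ≤ u s + ∫ y in s..τ, k y * u y) :
    u b ≤ u s * Real.exp (∫ y in s..b, k y) := by
  have huIcc : uIcc s b = Icc s b := uIcc_of_le hsb
  have hkuc : ContinuousOn (fun y => k y * u y) (Icc s b) := hk.mul hu
  have hkint : IntervalIntegrable k volume s b := by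
    apply ContinuousOn.intervalIntegrable; rwa [huIcc]
  have hkuint : IntervalIntegrable (fun y => k y * u y) volume s b := by
    apply ContinuousOn.intervalIntegrable; rwa [huIcc]
  set B : ℝ → ℝ := fun τ => ∫ y in s..τ, k y * u y with hBdef
  set Kk : ℝ → ℝ := fun τ => ∫ y in s..τ, k y with hKkdef
  set E : ℝ → ℝ := fun τ => (u s + B τ) * Real.exp (-Kk τ) with hEdef
  have hBc : ContinuousOn B (Icc s b) := by
    have := continuousOn_primitive_interval' hkuint (by rw [huIcc]; exact left_mem_Icc.2 hsb)
    rwa [huIcc] at this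
  have hKkc : ContinuousOn Kk (Icc s b) := by
    have := continuousOn_primitive_interval' hkint (by rw [huIcc]; exact left_mem_Icc.2 hsb)
    rwa [huIcc] at this
  have hEc : ContinuousOn E (Icc s b) :=
    (continuousOn_const.add hBc).mul (Real.continuous_exp.comp_continuousOn hKkc.neg)
  have hderiv : ∀ τ ∈ Ioo s b,
      HasDerivAt E (k τ * u τ * Real.exp (-Kk τ)
        + (u s + B τ) * (Real.exp (-Kk τ) * (-k τ))) τ := by
    intro τ hτ
    have hsub : uIcc s τ ⊆ uIcc s b := by
      rw [huIcc, uIcc_of_le hτ.1.le]; exact Icc_subset_Icc le_rfl hτ.2.le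
    have hmem : Icc s b ∈ nhds τ := Icc_mem_nhds hτ.1 hτ.2
    have hB' : HasDerivAt B (k τ * u τ) τ :=
      integral_hasDerivAt_right (hkuint.mono_set hsub)
        (ContinuousOn.stronglyMeasurableAtFilter isOpen_Ioo (hkuc.mono Ioo_subset_Icc_self) τ hτ)
        (hkuc.continuousAt hmem)
    have hKk' : HasDerivAt Kk (k τ) τ :=
      integral_hasDerivAt_right (hkint.mono_set hsub)
        (ContinuousOn.stronglyMeasurableAtFilter isOpen_Ioo (hk.mono Ioo_subset_Icc_self) τ hτ)
        (hk.continuousAt hmem)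
    exact (hB'.const_add (u s)).mul (hKk'.neg.exp)
  have hanti : AntitoneOn E (Icc s b) := by
    apply antitoneOn_of_deriv_nonpos (convex_Icc s b) hEc
    · intro τ hτ; rw [interior_Icc] at hτ
      exact (hderiv τ hτ).differentiableAt.differentiableWithinAt
    · intro τ hτ; rw [interior_Icc] at hτ
      rw [(hderiv τ hτ).deriv]
      have h1 : u τ ≤ u s + B τ := hineq τ (Ioo_subset_Icc_self hτ)
      have h2 : 0 ≤ k τ := hk0 τ (Ioo_subset_Icc_self hτ)
      have h3 : (0:ℝ) < Real.exp (-Kk τ) := Real.exp_pos _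
      nlinarith [mul_le_mul_of_nonneg_left h1 h2]
  have hEs : E s = u s := by simp [hEdef, hBdef, hKkdef]
  have hEb : E b ≤ u s := by
    have := hanti (left_mem_Icc.2 hsb) (right_mem_Icc.2 hsb) hsb
    rwa [hEs] at this
  have hub : u b ≤ u s + B b := hineq b (right_mem_Icc.2 hsb)
  have hexppos : (0:ℝ) < Real.exp (Kk b) := Real.exp_pos _
  have hEB : E b * Real.exp (Kk b) = u s + B b := by
    rw [hEdef]; rw [mul_assoc, ← Real.exp_add]; simp
  have h4 := mul_le_mul_of_nonneg_right hEb hexppos.le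
  rw [hEB] at h4
  show u b ≤ u s * Real.exp (Kk b)
  linarith

open intervalIntegral in
lemma main_right (a f : ℝ → ℝ) (x₀ b K : ℝ)
    (hx₀b : x₀ < b) (hK : 0 < K) (hK2 : K < 2)
    (hcont : ContinuousOn a (Icc x₀ b))
    (hpos : ∀ y ∈ Ioc x₀ b, 0 < a y)
    (hf : IntervalIntegrable f volume x₀ b)
    (hFTC : ∀ p q, x₀ ≤ p → p ≤ q → q ≤ b → a q - a p = ∫ y in p..q, f y)
    (hae : ∀ᵐ y, y ∈ Ioc x₀ b → (y - x₀) * f y ≤ K * a y) :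
    ∀ x ∈ Icc x₀ b,
      IntervalIntegrable (fun y => (y - x₀) / a y) volume x₀ x ∧
      0 ≤ (∫ y in x₀..x, (y - x₀) / a y) ∧
      (∫ y in x₀..x, (y - x₀) / a y) ≤ (b - x₀)^2 / (a b * (2 - K)) := by
  have hab : 0 < a b := hpos b ⟨hx₀b, le_rfl⟩
  have hbx : (0:ℝ) < b - x₀ := sub_pos.2 hx₀b
  have hQ : (0:ℝ) < (b - x₀) ^ K := Real.rpow_pos_of_pos hbx K
  -- Step A: pointwise lower bound on a
  have key : ∀ s ∈ Ioc x₀ b, a b * ((s - x₀) ^ K / (b - x₀) ^ K) ≤ a s := by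
    intro s hs
    have hsx : x₀ < s := hs.1
    have hsb : s ≤ b := hs.2
    have hsubset : Icc s b ⊆ Ioc x₀ b := fun y hy => ⟨lt_of_lt_of_le hsx hy.1, hy.2⟩
    set k : ℝ → ℝ := fun y => K / (y - x₀) with hkdef
    have hkc : ContinuousOn k (Icc s b) := by
      apply ContinuousOn.div continuousOn_const (by fun_prop)
      exact fun y hy => sub_ne_zero.2 (ne_of_gt (hsubset hy).1)
    have huc : ContinuousOn a (Icc s b) := hcont.mono (Icc_subset_Icc hsx.le le_rfl)
    have hk0 : ∀ y ∈ Icc s b, 0 ≤ k y := fun y hy =>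
      div_nonneg hK.le (sub_nonneg.2 (hsubset hy).1.le)
    have hineq : ∀ τ ∈ Icc s b, a τ ≤ a s + ∫ y in s..τ, k y * a y := by
      intro τ hτ
      have h1 : a τ - a s = ∫ y in s..τ, f y := hFTC s τ hsx.le hτ.1 hτ.2
      have hfint : IntervalIntegrable f volume s τ := hf.mono_set (by
        rw [uIcc_of_le hx₀b.le, uIcc_of_le hτ.1]
        exact Icc_subset_Icc hsx.le hτ.2)
      have hkaint : IntervalIntegrable (fun y => k y * a y) volume s τ := by
        apply ContinuousOn.intervalIntegrable
        rw [uIcc_of_le hτ.1]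
        exact (hkc.mul huc).mono (Icc_subset_Icc le_rfl hτ.2)
      have hmono : (∫ y in s..τ, f y) ≤ ∫ y in s..τ, k y * a y := by
        apply integral_mono_ae_restrict hτ.1 hfint hkaint
        filter_upwards [ae_restrict_of_ae hae, ae_restrict_mem measurableSet_Icc]
          with y hy hymem
        have hyIoc : y ∈ Ioc x₀ b := hsubset ⟨hymem.1, hymem.2.trans hτ.2⟩
        have hyx : (0:ℝ) < y - x₀ := sub_pos.2 hyIoc.1
        have h2 := hy hyIoc
        rw [hkdef]
        rw [div_mul_eq_mul_div, le_div_iff₀ hyx]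
        linarith
      linarith
    have hgron := gronwall_aux a k s b hsb huc hkc hk0 hineq
    have hcomp : (∫ y in s..b, k y) = K * Real.log ((b - x₀) / (s - x₀)) := by
      have h1 : (∫ y in s..b, k y) = K * ∫ y in s..b, 1 / (y - x₀) := by
        rw [← intervalIntegral.integral_const_mul]
        congr 1; ext y; rw [hkdef]; ring
      rw [h1]
      have h2 : (∫ y in s..b, 1 / (y - x₀)) = ∫ u in s - x₀..b - x₀, 1 / u :=
        intervalIntegral.integral_comp_sub_right (fun u => 1 / u) x₀
      rw [h2, integral_one_div]
      intro hmem
      rw [uIcc_of_le (by linarith : s - x₀ ≤ b - x₀)] at hmem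
      have : (0:ℝ) < s - x₀ := sub_pos.2 hsx
      linarith [hmem.1]
    rw [hcomp] at hgron
    have hsx0 : (0:ℝ) < s - x₀ := sub_pos.2 hsx
    have hrpos : (0:ℝ) < (b - x₀) / (s - x₀) := div_pos hbx hsx0
    have hr : Real.exp (K * Real.log ((b - x₀) / (s - x₀))) = ((b - x₀) / (s - x₀)) ^ K := by
      rw [Real.rpow_def_of_pos hrpos, mul_comm]
    rw [hr, Real.div_rpow hbx.le hsx0.le] at hgron
    have hP : (0:ℝ) < (s - x₀) ^ K := Real.rpow_pos_of_pos hsx0 K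
    have h5 : a b * ((s - x₀) ^ K / (b - x₀) ^ K)
        ≤ a s * ((b - x₀) ^ K / (s - x₀) ^ K) * ((s - x₀) ^ K / (b - x₀) ^ K) :=
      mul_le_mul_of_nonneg_right hgron (by positivity)
    have h6 : a s * ((b - x₀) ^ K / (s - x₀) ^ K) * ((s - x₀) ^ K / (b - x₀) ^ K) = a s := by
      field_simp
    linarith
  -- Step B
  intro x hx
  set C : ℝ := (b - x₀) ^ K / a b with hCdef
  have hC : 0 < C := div_pos hQ hab
  have hbound : ∀ y ∈ Ioc x₀ x, (y - x₀) / a y ≤ C * (y - x₀) ^ (1 - K) := by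
    intro y hy
    have hy' : y ∈ Ioc x₀ b := ⟨hy.1, hy.2.trans hx.2⟩
    have hay : 0 < a y := hpos y hy'
    have hyx : (0:ℝ) < y - x₀ := sub_pos.2 hy.1
    have hkey := key y hy'
    have hD : (0:ℝ) < a b * ((y - x₀) ^ K / (b - x₀) ^ K) := by positivity
    have h1 : (y - x₀) / a y ≤ (y - x₀) / (a b * ((y - x₀) ^ K / (b - x₀) ^ K)) :=
      div_le_div_of_nonneg_left hyx.le hD hkey
    have h2 : (y - x₀) / (a b * ((y - x₀) ^ K / (b - x₀) ^ K)) = C * (y - x₀) ^ (1 - K) := by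
      have hPy : (0:ℝ) < (y - x₀) ^ K := Real.rpow_pos_of_pos hyx K
      rw [Real.rpow_sub hyx, Real.rpow_one, hCdef]
      field_simp
    rw [h2] at h1; exact h1
  -- integrability of the dominating function
  have hdomii : IntervalIntegrable (fun y => C * (y - x₀) ^ (1 - K)) volume x₀ x := by
    have h1 : IntervalIntegrable (fun u : ℝ => u ^ (1 - K)) volume (x₀ - x₀) (x - x₀) :=
      intervalIntegrable_rpow' (by linarith)
    have h2 := (h1.comp_sub_right x₀).const_mul C
    simpa using h2
  -- integrability of the integrand
  have hgcont : ContinuousOn (fun y => (y - x₀) / a y) (Ioc x₀ x) := by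
    apply ContinuousOn.div (by fun_prop)
    · exact hcont.mono fun y hy => ⟨hy.1.le, hy.2.trans hx.2⟩
    · exact fun y hy => ne_of_gt (hpos y ⟨hy.1, hy.2.trans hx.2⟩)
  have hgint : IntegrableOn (fun y => (y - x₀) / a y) (Ioc x₀ x) := by
    apply Integrable.mono' ((intervalIntegrable_iff_integrableOn_Ioc_of_le hx.1).1 hdomii)
      (hgcont.aestronglyMeasurable measurableSet_Ioc)
    rw [ae_restrict_iff' measurableSet_Ioc]
    apply ae_of_all
    intro y hy
    have hyx : (0:ℝ) < y - x₀ := sub_pos.2 hy.1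
    have hay : 0 < a y := hpos y ⟨hy.1, hy.2.trans hx.2⟩
    rw [Real.norm_eq_abs, abs_of_nonneg (by positivity)]
    exact hbound y hy
  have hgii : IntervalIntegrable (fun y => (y - x₀) / a y) volume x₀ x :=
    (intervalIntegrable_iff_integrableOn_Ioc_of_le hx.1).2 hgint
  refine ⟨hgii, ?_, ?_⟩
  · apply intervalIntegral.integral_nonneg hx.1
    intro y hy
    rcases eq_or_lt_of_le hy.1 with h | h
    · simp [← h]
    · have hay : 0 < a y := hpos y ⟨h, hy.2.trans hx.2⟩
      exact div_nonneg (by linarith) hay.le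
  · have hmono : (∫ y in x₀..x, (y - x₀) / a y) ≤ ∫ y in x₀..x, C * (y - x₀) ^ (1 - K) := by
      apply integral_mono_on hx.1 hgii hdomii
      intro y hy
      rcases eq_or_lt_of_le hy.1 with h | h
      · rw [← h, sub_self, zero_div]
        positivity
      · exact hbound y ⟨h, hy.2⟩
    have hval : (∫ y in x₀..x, C * (y - x₀) ^ (1 - K)) = C * ((x - x₀) ^ (2 - K) / (2 - K)) := by
      rw [intervalIntegral.integral_const_mul]
      congr 1
      have h2 : (∫ y in x₀..x, (y - x₀) ^ (1 - K)) = ∫ u in x₀ - x₀..x - x₀, u ^ (1 - K) :=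
        intervalIntegral.integral_comp_sub_right (fun u => u ^ (1 - K)) x₀
      rw [h2, sub_self, integral_rpow (Or.inl (by linarith))]
      rw [Real.zero_rpow (by intro h; linarith : (1 : ℝ) - K + 1 ≠ 0)]
      rw [show (1:ℝ) - K + 1 = 2 - K by ring]
      ring
    rw [hval] at hmono
    have hle : (x - x₀) ^ (2 - K) ≤ (b - x₀) ^ (2 - K) :=
      Real.rpow_le_rpow (sub_nonneg.2 hx.1) (by linarith [hx.2]) (by linarith)
    have h2K : (0:ℝ) < 2 - K := by linarith
    have hfin : C * ((b - x₀) ^ (2 - K) / (2 - K)) = (b - x₀) ^ 2 / (a b * (2 - K)) := by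
      have hmul : (b - x₀) ^ K * (b - x₀) ^ (2 - K) = (b - x₀) ^ (2:ℕ) := by
        rw [← Real.rpow_natCast (b - x₀) 2, ← Real.rpow_add hbx]
        norm_num
      rw [hCdef]
      field_simp
      rw [← hmul]
    calc (∫ y in x₀..x, (y - x₀) / a y) ≤ C * ((x - x₀) ^ (2 - K) / (2 - K)) := hmono
      _ ≤ C * ((b - x₀) ^ (2 - K) / (2 - K)) := by
          exact mul_le_mul_of_nonneg_left (div_le_div_of_nonneg_right hle h2K.le) hC.le
      _ = (b - x₀) ^ 2 / (a b * (2 - K)) := hfin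

/-- Well-definedness and bounds for the weight `ψ`. -/
theorem statement11 (a : ℝ → ℝ) (x₀ K c₁ c₂ : ℝ) (wk : Bool)
    (ha : Deg a x₀ K wk) (hc₁ : 0 < c₁)
    (hc₂ : max ((1 - x₀)^2 / (a 1 * (2 - K))) (x₀^2 / (a 0 * (2 - K))) < c₂) :
    (∀ x ∈ Icc (0:ℝ) 1, IntervalIntegrable (fun y => (y - x₀) / a y) volume x₀ x) ∧
    ∀ x ∈ Icc (0:ℝ) 1, -(c₁ * c₂) ≤ psiW a x₀ c₁ c₂ x ∧ psiW a x₀ c₁ c₂ x < 0 := by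
  have hDeg : DegAt a x₀ K ∧ ACOn a 0 1 ∧ 0 < K ∧ K < 2 := by
    cases wk
    · obtain ⟨h1, h2, h3⟩ := ha
      exact ⟨h1, h2.1, by linarith [h3.1], h3.2⟩
    · obtain ⟨h1, h2, h3⟩ := ha
      exact ⟨h1, h2, h3.1, by linarith [h3.2]⟩
  obtain ⟨⟨hx₀, hax₀, hposAll, haeR⟩, ⟨hfi, heq⟩, hK0, hK2⟩ := hDeg
  have ha0 : 0 < a 0 := hposAll 0 ⟨le_rfl, by norm_num⟩ (ne_of_lt hx₀.1)
  have ha1 : 0 < a 1 := hposAll 1 ⟨by norm_num, le_rfl⟩ (ne_of_gt hx₀.2)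
  have h01 : (0:ℝ) ≤ 1 := by norm_num
  have hcont : ContinuousOn a (Icc (0:ℝ) 1) := by
    have hc := intervalIntegral.continuousOn_primitive_interval' hfi
      (by rw [uIcc_of_le h01]; exact left_mem_Icc.2 h01)
    rw [uIcc_of_le h01] at hc
    exact ContinuousOn.congr (continuousOn_const.add hc) (fun x hx => heq x hx)
  have hFTC : ∀ p q, 0 ≤ p → p ≤ q → q ≤ 1 → a q - a p = ∫ y in p..q, deriv a y := by
    intro p q hp hpq hq
    rw [heq p ⟨hp, hpq.trans hq⟩, heq q ⟨hp.trans hpq, hq⟩]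
    have h1 : IntervalIntegrable (deriv a) volume 0 q := hfi.mono_set
      (by rw [uIcc_of_le h01, uIcc_of_le (hp.trans hpq)]; exact Icc_subset_Icc le_rfl hq)
    have h2 : IntervalIntegrable (deriv a) volume 0 p := hfi.mono_set
      (by rw [uIcc_of_le h01, uIcc_of_le hp]; exact Icc_subset_Icc le_rfl (hpq.trans hq))
    have h3 := intervalIntegral.integral_interval_sub_left h1 h2
    linarith [h3]
  have hae_glob : ∀ᵐ y, y ∈ Icc (0:ℝ) 1 → (y - x₀) * deriv a y ≤ K * a y :=
    (ae_restrict_iff' measurableSet_Icc).1 haeR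
  have mainR := main_right a (deriv a) x₀ 1 K hx₀.2 hK0 hK2
    (hcont.mono (Icc_subset_Icc hx₀.1.le le_rfl))
    (fun y hy => hposAll y ⟨(hx₀.1.trans hy.1).le, hy.2⟩ hy.1.ne')
    (hfi.mono_set (by rw [uIcc_of_le h01, uIcc_of_le hx₀.2.le]; exact Icc_subset_Icc hx₀.1.le le_rfl))
    (fun p q hp hpq hq => hFTC p q (hx₀.1.le.trans hp) hpq hq)
    (hae_glob.mono fun y hy hmem => hy ⟨(hx₀.1.trans hmem.1).le, hmem.2⟩)
  -- left side via reflection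
  have hx₀2 : x₀ < 2 * x₀ := by linarith [hx₀.1]
  have hT := Measure.measurePreserving_sub_left (volume : Measure ℝ) (2 * x₀)
  have haerefl : ∀ᵐ τ : ℝ, (2 * x₀ - τ) ∈ Icc (0:ℝ) 1 →
      (2 * x₀ - τ - x₀) * deriv a (2 * x₀ - τ) ≤ K * a (2 * x₀ - τ) := by
    exact ae_of_ae_map (p := fun y => y ∈ Icc (0:ℝ) 1 → (y - x₀) * deriv a y ≤ K * a y)
      hT.measurable.aemeasurable (by rw [hT.map_eq]; exact hae_glob)
  have mainL := main_right (fun τ => a (2 * x₀ - τ)) (fun τ => -deriv a (2 * x₀ - τ))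
    x₀ (2 * x₀) K hx₀2 hK0 hK2
    (hcont.comp (by fun_prop)
      (fun τ hτ => ⟨by linarith [hτ.2], by linarith [hτ.1, hx₀.2.le]⟩))
    (fun τ hτ => hposAll (2 * x₀ - τ) ⟨by linarith [hτ.2], by linarith [hτ.1, hx₀.2.le]⟩
      (by have h : 2 * x₀ - τ < x₀ := by linarith [hτ.1]
          exact h.ne))
    (by
      have h1 : IntervalIntegrable (deriv a) volume 0 x₀ := hfi.mono_set
        (by rw [uIcc_of_le h01, uIcc_of_le hx₀.1.le]; exact Icc_subset_Icc le_rfl hx₀.2.le)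
      have h2 := (h1.comp_sub_left (2 * x₀)).neg.symm
      rw [show 2 * x₀ - 0 = 2 * x₀ by ring, show 2 * x₀ - x₀ = x₀ by ring] at h2
      exact h2)
    (by
      intro p q hp hpq hq
      rw [intervalIntegral.integral_neg, intervalIntegral.integral_comp_sub_left
        (deriv a) (2 * x₀)]
      have h1 := hFTC (2 * x₀ - q) (2 * x₀ - p) (by linarith) (by linarith)
        (by linarith [hx₀.2.le])
      linarith [h1])
    (by
      filter_upwards [haerefl] with τ hτ hmem
      have h1 := hτ ⟨by linarith [hmem.2], by linarith [hmem.1, hx₀.2.le]⟩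
      have h2 : (τ - x₀) * (-deriv a (2 * x₀ - τ)) = (2 * x₀ - τ - x₀) * deriv a (2 * x₀ - τ) := by
        ring
      rw [h2]; exact h1)
  have hcomb : ∀ x ∈ Icc (0:ℝ) 1, IntervalIntegrable (fun y => (y - x₀) / a y) volume x₀ x ∧
      0 ≤ (∫ y in x₀..x, (y - x₀) / a y) ∧ (∫ y in x₀..x, (y - x₀) / a y) < c₂ := by
    intro x hxmem
    rcases le_total x₀ x with hxx | hxx
    · obtain ⟨hii, h0, hub⟩ := mainR x ⟨hxx, hxmem.2⟩
      exact ⟨hii, h0, lt_of_le_of_lt (hub.trans (le_max_left _ _)) hc₂⟩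
    · obtain ⟨hii, h0, hub⟩ := mainL (2 * x₀ - x) ⟨by linarith, by linarith [hxmem.1]⟩
      try simp only at hii h0 hub
      rw [show 2 * x₀ - x₀ = x₀ by ring, show 2 * x₀ - 2 * x₀ = 0 by ring] at hub
      -- transfer integrability
      have h1 := (hii.comp_sub_left (2 * x₀)).neg
      rw [show 2 * x₀ - x₀ = x₀ by ring, show 2 * x₀ - (2 * x₀ - x) = x by ring] at h1
      try simp only at h1
      have hfe : (fun y : ℝ => (y - x₀) / a y)
          = -fun y : ℝ => (2 * x₀ - y - x₀) / a (2 * x₀ - (2 * x₀ - y)) := by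
        funext y
        simp only [Pi.neg_apply]
        rw [show 2 * x₀ - (2 * x₀ - y) = y by ring,
          show 2 * x₀ - y - x₀ = -(y - x₀) by ring, neg_div, neg_neg]
      have h1' : IntervalIntegrable (fun y : ℝ => (y - x₀) / a y) volume x₀ x := by
        rw [hfe]; exact h1
      -- transfer the integral value
      have hint_eq : (∫ y in x₀..x, (y - x₀) / a y)
          = ∫ τ in x₀..(2 * x₀ - x), (τ - x₀) / a (2 * x₀ - τ) := by
        have e1 : (∫ τ in x₀..(2 * x₀ - x), (τ - x₀) / a (2 * x₀ - τ))
            = ∫ τ in x₀..(2 * x₀ - x), -((2 * x₀ - τ - x₀) / a (2 * x₀ - τ)) := by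
          congr 1; funext τ
          rw [show 2 * x₀ - τ - x₀ = -(τ - x₀) by ring, neg_div, neg_neg]
        have e2 : (∫ τ in x₀..(2 * x₀ - x), (2 * x₀ - τ - x₀) / a (2 * x₀ - τ))
            = ∫ y in (2 * x₀ - (2 * x₀ - x))..(2 * x₀ - x₀), (y - x₀) / a y :=
          intervalIntegral.integral_comp_sub_left (fun y => (y - x₀) / a y) (2 * x₀)
        rw [e1, intervalIntegral.integral_neg, e2,
          show 2 * x₀ - (2 * x₀ - x) = x by ring, show 2 * x₀ - x₀ = x₀ by ring,
          intervalIntegral.integral_symm x₀ x, neg_neg]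
      rw [← hint_eq] at h0 hub
      refine ⟨h1', h0, lt_of_le_of_lt (hub.trans (le_max_right _ _)) hc₂⟩
  refine ⟨fun x hx => (hcomb x hx).1, fun x hx => ?_⟩
  obtain ⟨hii, h0, hub⟩ := hcomb x hx
  simp only [psiW]
  constructor
  · nlinarith [mul_nonneg hc₁.le h0]
  · exact mul_neg_of_pos_of_neg hc₁ (by linarith)
end
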